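/- The word BCBABCACBACABCACBABCBAB (the unique κ₂-instance extended by one more letter of the pattern) is not a factor of the Leech sequence. -/
import Mathlib

inductive T where
  | A | B | C
deriving DecidableEq, Repr

open T

def P : T → List T
  | A => [A,B,C,B,A,C,B,C,A,B,C,B,A]
  | B => [B,C,A,C,B,A,C,A,B,C,A,C,B]
  | C => [C,A,B,A,C,B,A,B,C,A,B,A,C]

def Pw (w : List T) : List T := w.flatMap P

def SqFree (w : List T) : Prop := ∀ x : List T, x ≠ [] → ¬ (x ++ x) <:+: w

def rot : T → T
  | A => B
  | B => C
  | C => A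

def rotw (w : List T) : List T := w.map rot

def refT : T → T
  | A => A
  | B => C
  | C => B

def reflw (w : List T) : List T := w.map refT

def OccursAt (w v : List T) (i : ℕ) : Prop := (v.drop i).take w.length = w

/-! Auxiliary development -/

lemma lenP (a : T) : (P a).length = 13 := by cases a <;> rfl

lemma Pw_append (x y : List T) : Pw (x ++ y) = Pw x ++ Pw y := by
  simp [Pw]

lemma lenPw (u : List T) : (Pw u).length = 13 * u.length := by
  induction u with
  | nil => rfl
  | cons a u ih =>
      show (P a ++ Pw u).length = _
      simp [lenP, ih, List.length_cons, Nat.mul_succ, Nat.mul_add]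
      ring

/-- Key decomposition: a short infix of `Pw u` is an infix of `Pw v` for
a short factor `v` of `u`. -/
lemma key (w : List T) (hw : w.length ≤ 26) :
    ∀ u : List T, w <:+: Pw u → ∃ v, v <:+: u ∧ v.length ≤ 3 ∧ w <:+: Pw v := by
  intro u
  induction u with
  | nil =>
      intro h
      exact ⟨[], List.infix_refl _, by simp, h⟩
  | cons a u ih =>
      intro h
      obtain ⟨s, t, hst⟩ := h
      have hcons : Pw (a :: u) = P a ++ Pw u := rfl
      by_cases hs : 13 ≤ s.length
      · -- occurrence lies in Pw u
        have hpre1 : P a <+: P a ++ Pw u := List.prefix_append _ _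
        have hpre2 : s <+: P a ++ Pw u := ⟨w ++ t, by rw [← hcons, ← hst]; simp⟩
        have hPs : P a <+: s :=
          List.prefix_of_prefix_length_le hpre1 hpre2 (by rw [lenP]; exact hs)
        obtain ⟨s', hs'⟩ := hPs
        have : P a ++ (s' ++ w ++ t) = P a ++ Pw u := by
          rw [← hcons, ← hst, ← hs']; simp
        have h2 : s' ++ w ++ t = Pw u := List.append_cancel_left this
        obtain ⟨v, hv, hvl, hvw⟩ := ih ⟨s', t, h2⟩
        exact ⟨v, List.infix_cons hv, hvl, hvw⟩
      · push_neg at hs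
        by_cases hu : 2 ≤ u.length
        · refine ⟨a :: u.take 2, ?_, ?_, ?_⟩
          · exact ⟨[], u.drop 2, by simp⟩
          · simp only [List.length_cons, List.length_take]; try omega
          · -- w is infix of the prefix Pw (a :: u.take 2) of Pw (a :: u)
            have hsplit : Pw (a :: u) = Pw (a :: u.take 2) ++ Pw (u.drop 2) := by
              rw [← Pw_append]
              congr 1
              simp
            have hswpre : s ++ w <+: Pw (a :: u) := ⟨t, hst⟩
            have hlen : (s ++ w).length ≤ (Pw (a :: u.take 2)).length := by
              rw [List.length_append, lenPw]
              have : (a :: u.take 2).length = 3 := by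
                simp only [List.length_cons, List.length_take]; try omega
              rw [this]
              omega
            have hppre : Pw (a :: u.take 2) <+: Pw (a :: u) :=
              ⟨Pw (u.drop 2), hsplit.symm⟩
            have : s ++ w <+: Pw (a :: u.take 2) :=
              List.prefix_of_prefix_length_le hswpre hppre hlen
            obtain ⟨t', ht'⟩ := this
            exact ⟨s, t', ht'⟩
        · push_neg at hu
          refine ⟨a :: u, List.infix_refl _, ?_, ⟨s, t, hst⟩⟩
          simp only [List.length_cons]
          omega

/-- All factors of length ≤ 3 of a list. -/
def factors3 (l : List T) : List (List T) :=
  (List.range (l.length + 1)).flatMap (fun i => (List.range 4).map (fun k => (l.drop i).take k))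

lemma mem_factors3 {v l : List T} (h : v <:+: l) (hl : v.length ≤ 3) : v ∈ factors3 l := by
  obtain ⟨s, t, hst⟩ := h
  have hs : s.length < l.length + 1 := by
    have : s.length ≤ l.length := by
      rw [← hst]; simp
    omega
  have hv : (l.drop s.length).take v.length = v := by
    rw [← hst, List.append_assoc, List.drop_left, List.take_left]
  simp only [factors3, List.mem_flatMap, List.mem_map, List.mem_range]
  exact ⟨s.length, hs, v.length, by omega, hv⟩

def S : List (List T) :=
  [[], [A], [B], [C], [A,B], [A,C], [B,A], [B,C], [C,A], [C,B],
   [A,B,A], [A,B,C], [A,C,A], [A,C,B], [B,A,B], [B,A,C], [B,C,A], [B,C,B],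
   [C,A,B], [C,A,C], [C,B,A], [C,B,C]]

set_option maxRecDepth 100000 in
lemma closureS : ∀ u ∈ S, ∀ v ∈ factors3 (Pw u), v ∈ S := by decide

lemma claim : ∀ n : ℕ, ∀ v : List T, v <:+: Pw^[n] [A] → v.length ≤ 3 → v ∈ S := by
  intro n
  induction n with
  | zero =>
      intro v hv hl
      have hsub : v ∈ factors3 [A] := mem_factors3 hv hl
      have hall : ∀ x ∈ factors3 [A], x ∈ S := by decide
      exact hall v hsub
  | succ n ih =>
      intro v hv hl
      rw [Function.iterate_succ_apply'] at hv
      obtain ⟨u, hu, hul, hvu⟩ := key v (by omega) _ hv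
      have huS : u ∈ S := ih u hu hul
      exact closureS u huS v (mem_factors3 hvu hl)

set_option maxRecDepth 100000 in
lemma finalS : ∀ u ∈ S,
    ¬ [B,C,B,A,B,C,A,C,B,A,C,A,B,C,A,C,B,A,B,C,B,A,B] <:+: Pw u := by decide

theorem stmt16 :
    ∀ n : ℕ, ¬ [B,C,B,A,B,C,A,C,B,A,C,A,B,C,A,C,B,A,B,C,B,A,B] <:+: Pw^[n] [A] := by
  intro n h
  match n with
  | 0 =>
      have := h.length_le
      simp at this
  | Nat.succ m =>
      rw [Function.iterate_succ_apply'] at h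
      obtain ⟨u, hu, hul, hvu⟩ := key _ (by decide) _ h
      exact finalS u (claim m u hu hul) hvu
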